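/- A strongly connected component (with at least one edge) of a labeled directed graph is multiple-parity if and only if it contains a directed cycle of parity −1 (a negative feedback loop). -/

import Mathlib

/-!
A negative cycle at `u` can be spliced into the concatenation of a walk `a ⤳ u` and a walk
`u ⤳ b`, which flips the parity of the resulting walk `a ⤳ b`; strong connectivity supplies
these two walks for every pair. Conversely, the negative path from an endpoint `a` of an edge
back to `a` is itself a negative cycle.
-/

inductive Reach {V : Type*} (E : Finset (V × V)) (w : V × V → ℤ) : V → V → ℤ → Prop
  | refl (u : V) : Reach E w u u 1
  | step {u v t : V} {x : ℤ} : Reach E w u v x → (v, t) ∈ E → Reach E w u t (x * w (v, t))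

namespace Reach

variable {V : Type*} {E : Finset (V × V)} {w : V × V → ℤ} {a b c : V} {x y : ℤ}

lemma trans (h₁ : Reach E w a b x) (h₂ : Reach E w b c y) : Reach E w a c (x * y) := by
  induction h₂ with
  | refl => simpa using h₁
  | step _ he ih => rw [← mul_assoc]; exact ih.step he

lemma eq_one_or_eq_neg_one (hw : ∀ e ∈ E, w e = -1 ∨ w e = 1) (h : Reach E w a b x) :
    x = 1 ∨ x = -1 := by
  induction h with
  | refl => exact Or.inl rfl
  | step _ he ih => rcases ih with rfl | rfl <;> rcases hw _ he with h | h <;> simp [h]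

lemma one_and_neg_one_of_neg (hw : ∀ e ∈ E, w e = -1 ∨ w e = 1)
    (h : Reach E w a b x) (h' : Reach E w a b (-x)) :
    Reach E w a b 1 ∧ Reach E w a b (-1) := by
  rcases h.eq_one_or_eq_neg_one hw with rfl | rfl
  · exact ⟨h, h'⟩
  · exact ⟨by simpa using h', h⟩

lemma one_and_neg_one_of_neg_cycle {u : V} (hw : ∀ e ∈ E, w e = -1 ∨ w e = 1)
    (hau : Reach E w a u x) (hcycle : Reach E w u u (-1)) (hub : Reach E w u b y) :
    Reach E w a b 1 ∧ Reach E w a b (-1) :=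
  one_and_neg_one_of_neg hw (hau.trans hub) (by simpa using (hau.trans hcycle).trans hub)

end Reach

/-- A strongly connected component (with at least one edge) is multiple-parity
(every ordered pair of its vertices is connected within the component by paths of both
parities) iff it contains a directed cycle of parity `-1` (a negative feedback loop). -/
theorem stmt_13 {V : Type*} [DecidableEq V] (E : Finset (V × V)) (w : V × V → ℤ)
    (hw : ∀ e ∈ E, w e = -1 ∨ w e = 1)
    (V₁ : Finset V)
    (E₁ : Finset (V × V)) (hE₁ : E₁ = E.filter (fun e => e.1 ∈ V₁ ∧ e.2 ∈ V₁))
    (hconn : ∀ a ∈ V₁, ∀ b ∈ V₁, ∃ x : ℤ, Reach E₁ w a b x)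
    (hedge : E₁.Nonempty) :
    (∀ a ∈ V₁, ∀ b ∈ V₁, Reach E₁ w a b 1 ∧ Reach E₁ w a b (-1)) ↔
      (∃ u ∈ V₁, Reach E₁ w u u (-1)) := by
  subst hE₁
  have hw₁ : ∀ e ∈ E.filter (fun e => e.1 ∈ V₁ ∧ e.2 ∈ V₁), w e = -1 ∨ w e = 1 :=
    fun e he => hw e (Finset.mem_of_mem_filter e he)
  constructor
  · intro h
    obtain ⟨⟨a, b⟩, he⟩ := hedge
    have ha : a ∈ V₁ := (Finset.mem_filter.mp he).2.1
    exact ⟨a, ha, (h a ha a ha).2⟩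
  · rintro ⟨u, hu, hcycle⟩ a ha b hb
    obtain ⟨x, hau⟩ := hconn a ha u hu
    obtain ⟨y, hub⟩ := hconn u hu b hb
    exact Reach.one_and_neg_one_of_neg_cycle hw₁ hau hcycle hub
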